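/- Fix H > 0 with H ≠ 1/2 and define c_H(a,b) := ∫₀^{min(a,b)} (a−u)^{H−1/2} (b−u)^{H−1/2} du for a, b > 0. Then there exist 0 < s < t < u such that c_H(s,u) · c_H(t,t) ≠ c_H(s,t) · c_H(t,u). -/

import Mathlib

/-!
Substituting `u ↦ c u` gives `cH H (c a) (c b) = c ^ (2H) * cH H a b`, and
`cH H t t = t ^ (2H) / (2H)`, so Doob's identity at the times `(ε², ε, 1)` reads
`cH H ε² 1 / (2H) = (cH H ε 1)²`. On `[0, x]` the factor `(1 - u) ^ (H - 1/2)` lies between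
`(1 - x) ^ (H - 1/2)` and `1`, so `cH H x 1 ~ x ^ (H + 1/2) / (H + 1/2)` as `x → 0⁺`.
Dividing the identity by `ε ^ (2H + 1)` and letting `ε → 0⁺` gives `1 / (2H) = 1 / (H + 1/2)`,
i.e. `H = 1/2`.
-/

open MeasureTheory Set Filter intervalIntegral

/-- Covariance function of the Riemann–Liouville process
`Y_t = ∫₀ᵗ (t−s)^{H−1/2} dB_s`. -/
noncomputable def cH (H a b : ℝ) : ℝ :=
  ∫ u in (0:ℝ)..(min a b), (a - u) ^ (H - 1/2) * (b - u) ^ (H - 1/2)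

open Topology

lemma integral_sub_rpow {r : ℝ} (a : ℝ) (hr : -1 < r) :
    ∫ u in (0:ℝ)..a, (a - u) ^ r = a ^ (r + 1) / (r + 1) := by
  rw [integral_comp_sub_left (· ^ r) a, sub_self, sub_zero, integral_rpow (Or.inl hr),
    Real.zero_rpow (by linarith), sub_zero]

lemma intervalIntegrable_sub_rpow {r : ℝ} (a : ℝ) (hr : -1 < r) :
    IntervalIntegrable (fun u => (a - u) ^ r) volume 0 a := by
  simpa using (intervalIntegrable_rpow' hr (a := a) (b := 0)).comp_sub_left a

lemma rpow_mem_uIcc_of_le {x y z : ℝ} (r : ℝ) (hx : 0 < x) (hxy : x ≤ y) (hyz : y ≤ z) :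
    y ^ r ∈ uIcc (x ^ r) (z ^ r) := by
  rcases le_total 0 r with hr | hr
  · exact mem_uIcc.2 <| Or.inl
      ⟨Real.rpow_le_rpow hx.le hxy hr, Real.rpow_le_rpow (hx.le.trans hxy) hyz hr⟩
  · exact mem_uIcc.2 <| Or.inr
      ⟨Real.rpow_le_rpow_of_nonpos (hx.trans_le hxy) hyz hr,
        Real.rpow_le_rpow_of_nonpos hx hxy hr⟩

lemma cH_mul_mul (H : ℝ) {c a b : ℝ} (hc : 0 < c) (ha : 0 ≤ a) (hb : 0 ≤ b) :
    cH H (c * a) (c * b) = c ^ (2 * H) * cH H a b := by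
  have hint : EqOn (fun v => (c * a - c * v) ^ (H - 1/2) * (c * b - c * v) ^ (H - 1/2))
      (fun v => (c ^ (H - 1/2) * c ^ (H - 1/2)) * ((a - v) ^ (H - 1/2) * (b - v) ^ (H - 1/2)))
      (uIcc 0 (min a b)) := by
    intro v hv
    rw [uIcc_of_le (le_min ha hb)] at hv
    simp only [← mul_sub]
    rw [Real.mul_rpow hc.le (by linarith [hv.2, min_le_left a b]),
      Real.mul_rpow hc.le (by linarith [hv.2, min_le_right a b])]
    ring
  rw [cH, cH, ← mul_min_of_nonneg _ _ hc.le]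
  conv_lhs => rw [← mul_zero c]
  rw [← smul_integral_comp_mul_left, integral_congr hint, intervalIntegral.integral_const_mul,
    smul_eq_mul, ← mul_assoc, ← Real.rpow_add hc, mul_comm c, ← Real.rpow_add_one hc.ne',
    show H - 1/2 + (H - 1/2) + 1 = 2 * H by ring]

lemma cH_self {H t : ℝ} (hH : 0 < H) (ht : 0 ≤ t) :
    cH H t t = t ^ (2 * H) / (2 * H) := by
  have hint : EqOn (fun u => (t - u) ^ (H - 1/2) * (t - u) ^ (H - 1/2))
      (fun u => (t - u) ^ (2 * H - 1)) (uIcc 0 t) := by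
    intro u hu
    rw [uIcc_of_le ht] at hu
    have htu : 0 ≤ t - u := by linarith [hu.2]
    simp only
    rw [← Real.mul_rpow htu htu, ← sq, ← Real.rpow_natCast, ← Real.rpow_mul htu]
    ring_nf
  rw [cH, min_self, integral_congr hint, integral_sub_rpow t (by linarith)]
  ring_nf

lemma abs_cH_sub_le {H a b : ℝ} (hH : -1/2 < H) (ha : 0 ≤ a) (hab : a < b) :
    |cH H a b - b ^ (H - 1/2) * (a ^ (H + 1/2) / (H + 1/2))|
      ≤ |b ^ (H - 1/2) - (b - a) ^ (H - 1/2)| * (a ^ (H + 1/2) / (H + 1/2)) := by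
  have hα : -1 < H - 1/2 := by linarith
  have hexp : H - 1/2 + 1 = H + 1/2 := by ring
  have hf := intervalIntegrable_sub_rpow a hα
  have hg : ContinuousOn (fun u => (b - u) ^ (H - 1/2)) (uIcc 0 a) := by
    refine (continuousOn_const.sub continuousOn_id).rpow_const fun u hu => Or.inl ?_
    rw [uIcc_of_le ha] at hu
    exact (sub_pos.2 (hu.2.trans_lt hab)).ne'
  have hdiff : cH H a b - b ^ (H - 1/2) * (a ^ (H + 1/2) / (H + 1/2))
      = ∫ u in (0:ℝ)..a, (a - u) ^ (H - 1/2) * ((b - u) ^ (H - 1/2) - b ^ (H - 1/2)) := by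
    simp only [mul_sub]
    rw [cH, min_eq_left hab.le, integral_sub (hf.mul_continuousOn hg) (hf.mul_const _),
      intervalIntegral.integral_mul_const, integral_sub_rpow a hα, hexp, mul_comm]
  have hpt : ∀ u ∈ Ioc 0 a, ‖(a - u) ^ (H - 1/2) * ((b - u) ^ (H - 1/2) - b ^ (H - 1/2))‖
      ≤ (a - u) ^ (H - 1/2) * |b ^ (H - 1/2) - (b - a) ^ (H - 1/2)| := by
    intro u ⟨hu0, hua⟩
    have hau : 0 ≤ (a - u) ^ (H - 1/2) := Real.rpow_nonneg (by linarith) _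
    rw [norm_mul, Real.norm_of_nonneg hau, Real.norm_eq_abs, abs_sub_comm]
    exact mul_le_mul_of_nonneg_left (abs_sub_right_of_mem_uIcc
      (rpow_mem_uIcc_of_le _ (by linarith) (by linarith) (by linarith))) hau
  calc _ = ‖∫ u in (0:ℝ)..a, (a - u) ^ (H - 1/2) * ((b - u) ^ (H - 1/2) - b ^ (H - 1/2))‖ :=
        by rw [hdiff, Real.norm_eq_abs]
    _ ≤ ∫ u in (0:ℝ)..a, (a - u) ^ (H - 1/2) * |b ^ (H - 1/2) - (b - a) ^ (H - 1/2)| :=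
        norm_integral_le_of_norm_le ha (ae_of_all _ hpt) (hf.mul_const _)
    _ = _ := by rw [intervalIntegral.integral_mul_const, integral_sub_rpow a hα, hexp, mul_comm]

lemma tendsto_cH_div_rpow {H : ℝ} (hH : -1/2 < H) :
    Tendsto (fun x => cH H x 1 / x ^ (H + 1/2)) (𝓝[>] 0) (𝓝 (1 / (H + 1/2))) := by
  have hbound :
      Tendsto (fun x : ℝ => |1 - (1 - x) ^ (H - 1/2)| / (H + 1/2)) (𝓝 0) (𝓝 0) := by
    have : ContinuousAt (fun x : ℝ => |1 - (1 - x) ^ (H - 1/2)| / (H + 1/2)) 0 := by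
      fun_prop (disch := norm_num)
    simpa using this.tendsto
  rw [tendsto_iff_norm_sub_tendsto_zero]
  refine squeeze_zero' (Eventually.of_forall fun _ => norm_nonneg _) ?_
    (hbound.mono_left nhdsWithin_le_nhds)
  filter_upwards [Ioo_mem_nhdsGT zero_lt_one] with x hx
  have hxp : 0 < x ^ (H + 1/2) := Real.rpow_pos_of_pos hx.1 _
  have h := abs_cH_sub_le hH hx.1.le hx.2
  rw [Real.one_rpow, one_mul] at h
  rw [Real.norm_eq_abs, show cH H x 1 / x ^ (H + 1/2) - 1 / (H + 1/2)
      = (cH H x 1 - x ^ (H + 1/2) / (H + 1/2)) / x ^ (H + 1/2) by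
        rw [sub_div, div_right_comm, div_self hxp.ne'],
    abs_div, abs_of_pos hxp, div_le_iff₀ hxp]
  exact h.trans_eq (by ring)

lemma cH_sq_one_div_eq_of_markov {H ε : ℝ} (hH : 0 < H) (hε : 0 < ε)
    (h : cH H (ε ^ 2) 1 * cH H ε ε = cH H (ε ^ 2) ε * cH H ε 1) :
    cH H (ε ^ 2) 1 / (2 * H) = cH H ε 1 ^ 2 := by
  have hscale : cH H (ε ^ 2) ε = ε ^ (2 * H) * cH H ε 1 := by
    simpa [sq] using cH_mul_mul H hε hε.le zero_le_one
  rw [cH_self hH hε.le, hscale] at h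
  field_simp at h ⊢
  linear_combination h

/-- Failure of Doob's Markov-property criterion for the covariance of the
Riemann–Liouville process when `H ≠ 1/2`: there are times `0 < s < t < u`
with `c_H(s,u) c_H(t,t) ≠ c_H(s,t) c_H(t,u)`. -/
theorem stmt_13 (H : ℝ) (hH : 0 < H) (hH' : H ≠ 1/2) :
    ∃ s t u : ℝ, 0 < s ∧ s < t ∧ t < u ∧
      cH H s u * cH H t t ≠ cH H s t * cH H t u := by
  by_contra! hMarkov
  set g := fun x => cH H x 1 / x ^ (H + 1/2)
  have hrel : ∀ᶠ ε in 𝓝[>] (0:ℝ), g (ε ^ 2) / (2 * H) = g ε ^ 2 := by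
    filter_upwards [Ioo_mem_nhdsGT zero_lt_one] with ε ⟨hε0, hε1⟩
    have h := cH_sq_one_div_eq_of_markov hH hε0
      (hMarkov (ε ^ 2) ε 1 (by positivity) (by nlinarith) hε1)
    simp only [g]
    rw [← Real.rpow_pow_comm hε0.le, div_pow, ← h]
    ring
  have hg := tendsto_cH_div_rpow (H := H) (by linarith)
  have hsq : Tendsto (fun ε : ℝ => ε ^ 2) (𝓝[>] 0) (𝓝[>] 0) := by
    simpa using ((continuous_pow 2).continuousWithinAt (x := (0:ℝ))).tendsto_nhdsWithin
      (fun x (hx : x ∈ Ioi (0:ℝ)) => mem_Ioi.2 (pow_pos hx 2))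
  have hL := tendsto_nhds_unique_of_eventuallyEq ((hg.comp hsq).div_const (2 * H)) (hg.pow 2) hrel
  apply hH'
  field_simp at hL
  linarith
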